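/- Let g be a 4×4 real symmetric matrix with det g < 0. An element L ∈ so(g) is simple (equal to u vᵀ g − v uᵀ g for some u, v) if and only if L³ + (tr₂ L)·L = 0. Moreover, if L = u vᵀ g − v uᵀ g, then tr₂ L = (uᵀ g u)(vᵀ g v) − (uᵀ g v)². -/

import Mathlib

/-!
A simple `L = (u vᵀ - v uᵀ) g` factors as `U W` through `ℝ²`, so `det (1 + t L) = det (1 + t W U)`
(Weinstein–Aronszajn) and `L³ = U (W U)² W`. Since `tr (W U) = tr L = 0`, Cayley–Hamilton for the
`2 × 2` matrix `W U` gives `(W U)² = -det (W U)`, while `tr₂ L = det (W U)`; this proves the cubic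
and the formula for `tr₂ L`.

Conversely, write `det (1 + t L) = Σ cₖ tᵏ`, where `cₖ` are the coefficients of the characteristic
polynomial of `-L` read backwards. Cayley–Hamilton for `-L` combined with `L³ = -c₂ L` leaves
`(c₃ c₂ - c₁) L + c₀ = 0`, and taking traces gives `det L = c₀ = 0`. Then `F = L g⁻¹` is
antisymmetric and singular, so its Pfaffian vanishes; the Plücker relations then express `F` as
`a bᵀ - b aᵀ` for suitable multiples `a`, `b` of two columns of `F`.
-/

open Matrix Polynomial

/-- The k-th order trace of a 4×4 matrix: the coefficient of t^k in det(I + tM). -/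
noncomputable def trk (k : ℕ) (M : Matrix (Fin 4) (Fin 4) ℝ) : ℝ :=
  ((1 + (X : ℝ[X]) • M.map C).det).coeff k

section CommRing

variable {R : Type*} [CommRing R] {m n : Type*} [Fintype m] [Fintype n]

lemma wedge_mul_eq_mul (u v : n → R) (g : Matrix n n R) :
    (vecMulVec u v - vecMulVec v u) * g = (of ![u, v])ᵀ * of ![v ᵥ* g, -(u ᵥ* g)] := by
  rw [Matrix.sub_mul, vecMulVec_mul, vecMulVec_mul]
  ext i j
  simp [mul_apply, vecMulVec_apply, Fin.sum_univ_two, sub_eq_add_neg]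

lemma det_one_add_X_smul_mul_comm [DecidableEq m] [DecidableEq n] (A : Matrix m n R)
    (B : Matrix n m R) :
    det (1 + (X : R[X]) • (A * B).map C) = det (1 + (X : R[X]) • (B * A).map C) := by
  rw [Matrix.map_mul, Matrix.map_mul, ← Matrix.smul_mul, ← Matrix.mul_smul]
  exact det_one_add_mul_comm _ _

lemma det_one_add_X_smul_fin_two (B : Matrix (Fin 2) (Fin 2) R) :
    det (1 + (X : R[X]) • B.map C) = 1 + C B.trace * X + C B.det * X ^ 2 := by
  simp only [det_fin_two, trace_fin_two, Matrix.add_apply, Matrix.smul_apply, map_apply,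
    smul_eq_mul, one_apply_eq, one_apply_ne, ne_eq, zero_ne_one, one_ne_zero, not_false_eq_true,
    zero_add, X_mul_C, map_add, map_sub, map_mul]
  ring

lemma mul_self_eq_neg_det_smul_of_trace_eq_zero [Nontrivial R] (B : Matrix (Fin 2) (Fin 2) R)
    (h : B.trace = 0) : B * B = -B.det • 1 := by
  have hB := aeval_self_charpoly B
  rw [charpoly_fin_two, h] at hB
  simp only [map_zero, zero_mul, sub_zero, map_add, map_pow, aeval_X, aeval_C] at hB
  rw [← sq, neg_smul, ← Algebra.algebraMap_eq_smul_one]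
  exact eq_neg_of_add_eq_zero_left hB

lemma aeval_self_charpoly_fin_four [Nontrivial R] (N : Matrix (Fin 4) (Fin 4) R) :
    N ^ 4 + N.charpoly.coeff 3 • N ^ 3 + N.charpoly.coeff 2 • N ^ 2 + N.charpoly.coeff 1 • N
      + N.charpoly.coeff 0 • 1 = 0 := by
  have hCH := aeval_self_charpoly N
  rw [aeval_eq_sum_range, charpoly_natDegree_eq_dim, Fintype.card_fin] at hCH
  have hc4 : N.charpoly.coeff 4 = 1 := by simpa using (charpoly_monic N).coeff_natDegree
  simp only [Finset.sum_range_succ, Finset.range_one, Finset.sum_singleton, pow_zero, pow_one,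
    hc4, one_smul] at hCH
  linear_combination (norm := module) hCH

end CommRing

lemma trk_eq_coeff_charpoly_neg (M : Matrix (Fin 4) (Fin 4) ℝ) {k : ℕ} (hk : k ≤ 4) :
    trk k M = (-M).charpoly.coeff (4 - k) := by
  rw [trk, ← sub_neg_eq_add, ← smul_neg, ← Matrix.map_neg _ (map_neg C), ← charpolyRev,
    ← reverse_charpoly, coeff_reverse, charpoly_natDegree_eq_dim, Fintype.card_fin, revAt_le hk]

lemma trk_two_mul_eq_det (U : Matrix (Fin 4) (Fin 2) ℝ) (W : Matrix (Fin 2) (Fin 4) ℝ) :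
    trk 2 (U * W) = (W * U).det := by
  rw [trk, det_one_add_X_smul_mul_comm, det_one_add_X_smul_fin_two]
  simp [coeff_one]

lemma mul_pow_three_add_trk_two_smul (U : Matrix (Fin 4) (Fin 2) ℝ) (W : Matrix (Fin 2) (Fin 4) ℝ)
    (h : (U * W).trace = 0) : (U * W) ^ 3 + trk 2 (U * W) • (U * W) = 0 := by
  have hWU : W * U * (W * U) = -(W * U).det • 1 :=
    mul_self_eq_neg_det_smul_of_trace_eq_zero _ (trace_mul_comm U W ▸ h)
  calc (U * W) ^ 3 + trk 2 (U * W) • (U * W)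
      = U * (W * U * (W * U)) * W + (W * U).det • (U * W) := by
        rw [trk_two_mul_eq_det]
        simp only [pow_succ, pow_zero, Matrix.one_mul, Matrix.mul_assoc]
    _ = 0 := by simp [hWU, Matrix.mul_smul, Matrix.smul_mul]

lemma trk_two_wedge_mul {g : Matrix (Fin 4) (Fin 4) ℝ} (hg : gᵀ = g) (u v : Fin 4 → ℝ) :
    trk 2 ((vecMulVec u v - vecMulVec v u) * g)
      = (u ⬝ᵥ g *ᵥ u) * (v ⬝ᵥ g *ᵥ v) - (u ⬝ᵥ g *ᵥ v) ^ 2 := by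
  have hvu : v ⬝ᵥ g *ᵥ u = u ⬝ᵥ g *ᵥ v := by
    rw [dotProduct_mulVec, ← mulVec_transpose, hg, dotProduct_comm]
  rw [wedge_mul_eq_mul, trk_two_mul_eq_det, det_fin_two]
  simp only [mul_apply, transpose_apply, of_apply, cons_val_zero, cons_val_one, Pi.neg_apply,
    neg_mul, Finset.sum_neg_distrib, ← dotProduct.eq_1, ← dotProduct_mulVec, hvu]
  ring

lemma det_eq_zero_of_pow_three_add_trk_two_smul {M : Matrix (Fin 4) (Fin 4) ℝ}
    (htr : M.trace = 0) (h : M ^ 3 + trk 2 M • M = 0) : M.det = 0 := by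
  have hc2 : trk 2 M = (-M).charpoly.coeff 2 := trk_eq_coeff_charpoly_neg M (k := 2) (by norm_num)
  have hM3 : M ^ 3 = -trk 2 M • M := by rw [neg_smul]; exact eq_neg_of_add_eq_zero_left h
  have hCH := aeval_self_charpoly_fin_four (-M)
  rw [Even.neg_pow (by decide), Odd.neg_pow (by decide), Even.neg_pow (by decide), ← hc2,
    pow_succ', hM3, Matrix.mul_smul, ← sq] at hCH
  have hlin : ((-M).charpoly.coeff 3 * trk 2 M - (-M).charpoly.coeff 1) • M
      + (-M).charpoly.coeff 0 • 1 = 0 := by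
    linear_combination (norm := module) hCH
  have h0 : (-M).charpoly.coeff 0 = 0 := by simpa [htr] using congrArg trace hlin
  simpa [det_neg, h0] using det_eq_sign_charpoly_coeff (-M)

section Orthogonal

variable {K : Type*} [Field K] {n : Type*} [Fintype n] [DecidableEq n] {g L : Matrix n n K}

lemma trace_eq_zero_of_transpose_mul_add_mul_eq_zero [CharZero K] (hg : IsUnit g.det)
    (hL : Lᵀ * g + g * L = 0) : L.trace = 0 := by
  refine self_eq_neg.mp ?_
  calc L.trace = (Lᵀ * g * g⁻¹).trace := by
        rw [mul_nonsing_inv_cancel_right _ _ hg, trace_transpose]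
    _ = -(g * (L * g⁻¹)).trace := by
      rw [eq_neg_of_add_eq_zero_left hL, Matrix.neg_mul, trace_neg, Matrix.mul_assoc]
    _ = -L.trace := by rw [trace_mul_comm, nonsing_inv_mul_cancel_right _ _ hg]

lemma transpose_mul_inv_eq_neg (hsymm : gᵀ = g) (hg : IsUnit g.det) (hL : Lᵀ * g + g * L = 0) :
    (L * g⁻¹)ᵀ = -(L * g⁻¹) :=
  calc (L * g⁻¹)ᵀ = g⁻¹ * (Lᵀ * g) * g⁻¹ := by
        rw [transpose_mul, transpose_nonsing_inv, hsymm, ← Matrix.mul_assoc,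
          mul_nonsing_inv_cancel_right _ _ hg]
    _ = -(L * g⁻¹) := by
        rw [eq_neg_of_add_eq_zero_left hL, Matrix.mul_neg, ← Matrix.mul_assoc,
          nonsing_inv_mul _ hg, Matrix.one_mul, Matrix.neg_mul]

end Orthogonal

section Antisymmetric

variable {K : Type*} [Field K] {n : Type*} {F : Matrix n n K}

lemma apply_eq_neg_of_transpose_eq_neg (hF : Fᵀ = -F) (i j : n) : F j i = -F i j := by
  simpa using congrFun (congrFun hF i) j

lemma apply_self_eq_zero_of_transpose_eq_neg [CharZero K] (hF : Fᵀ = -F) (i : n) : F i i = 0 :=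
  self_eq_neg.mp (apply_eq_neg_of_transpose_eq_neg hF i i)

end Antisymmetric

section Pfaffian

variable {K : Type*} [Field K]

def pfaffian (F : Matrix (Fin 4) (Fin 4) K) : K := F 0 1 * F 2 3 - F 0 2 * F 1 3 + F 0 3 * F 1 2

variable [CharZero K] {F : Matrix (Fin 4) (Fin 4) K}

lemma det_eq_pfaffian_sq (hF : Fᵀ = -F) : F.det = pfaffian F ^ 2 := by
  have ha := apply_eq_neg_of_transpose_eq_neg hF
  rw [det_succ_row_zero]
  simp only [Fin.sum_univ_four, det_fin_three, submatrix_apply, Fin.succAbove, Fin.reduceSucc,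
    Fin.reduceCastSucc, Fin.reduceLT, ↓reduceIte, Fin.coe_ofNat_eq_mod, ha 0 1, ha 0 2, ha 0 3,
    ha 1 2, ha 1 3, ha 2 3, apply_self_eq_zero_of_transpose_eq_neg hF]
  unfold pfaffian
  ring

lemma pfaffian_plucker (hF : Fᵀ = -F) (hP : pfaffian F = 0) (i j k l : Fin 4) :
    F i j * F k l - F i k * F j l + F i l * F j k = 0 := by
  have ha := apply_eq_neg_of_transpose_eq_neg hF
  have h0 := apply_self_eq_zero_of_transpose_eq_neg hF
  unfold pfaffian at hP
  fin_cases i <;> fin_cases j <;> fin_cases k <;> fin_cases l <;>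
    simp only [Fin.reduceFinMk, Fin.isValue, ha 0 1, ha 0 2, ha 0 3, ha 1 2, ha 1 3, ha 2 3, h0] <;>
    first
      | ring1
      | linear_combination hP
      | linear_combination -hP

lemma exists_eq_vecMulVec_sub_of_det_eq_zero (hF : Fᵀ = -F) (hdet : F.det = 0) :
    ∃ a b : Fin 4 → K, F = vecMulVec a b - vecMulVec b a := by
  have hP : pfaffian F = 0 := pow_eq_zero_iff two_ne_zero |>.mp (det_eq_pfaffian_sq hF ▸ hdet)
  by_cases hF0 : F = 0
  · exact ⟨0, 0, by simp [hF0]⟩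
  obtain ⟨i, j, hij⟩ : ∃ i j, F i j ≠ 0 := by
    by_contra! h
    exact hF0 (Matrix.ext h)
  refine ⟨fun k => F k i / F i j, fun k => F k j, Matrix.ext fun k l => ?_⟩
  have ha := apply_eq_neg_of_transpose_eq_neg hF
  simp only [Matrix.sub_apply, vecMulVec_apply]
  field_simp
  rw [ha i k, ha j k, ha i l, ha j l]
  linear_combination pfaffian_plucker hF hP i j k l

end Pfaffian

theorem simple_iff_cubic (g L : Matrix (Fin 4) (Fin 4) ℝ)
    (hsymm : gᵀ = g) (hg : g.det < 0) (hL : Lᵀ * g + g * L = 0) :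
    ((∃ u v : Fin 4 → ℝ, L = (vecMulVec u v - vecMulVec v u) * g) ↔
      L ^ 3 + trk 2 L • L = 0) ∧
    (∀ u v : Fin 4 → ℝ, L = (vecMulVec u v - vecMulVec v u) * g →
      trk 2 L = (u ⬝ᵥ g *ᵥ u) * (v ⬝ᵥ g *ᵥ v) - (u ⬝ᵥ g *ᵥ v) ^ 2) := by
  have hg' : IsUnit g.det := hg.ne.isUnit
  have htr : L.trace = 0 := trace_eq_zero_of_transpose_mul_add_mul_eq_zero hg' hL
  refine ⟨⟨?_, fun hcube => ?_⟩, fun u v huv => huv ▸ trk_two_wedge_mul hsymm u v⟩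
  · rintro ⟨u, v, rfl⟩
    rw [wedge_mul_eq_mul] at htr ⊢
    exact mul_pow_three_add_trk_two_smul _ _ htr
  · have hdet : (L * g⁻¹).det = 0 := by
      rw [det_mul, det_eq_zero_of_pow_three_add_trk_two_smul htr hcube, zero_mul]
    obtain ⟨a, b, hab⟩ :=
      exists_eq_vecMulVec_sub_of_det_eq_zero (transpose_mul_inv_eq_neg hsymm hg' hL) hdet
    exact ⟨a, b, by rw [← hab, nonsing_inv_mul_cancel_right _ _ hg']⟩
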